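/- The inclusion operator J : c → ℓ^∞ is completely quasi Levi but not σ-Levi: every norm-bounded increasing net in c has order-convergent image in ℓ^∞, yet for the bounded increasing sequence x_n = Σ_{k=1}^n e_{2k} in c there is no x ∈ c with J x_n order-converging to J x in ℓ^∞. -/

import Mathlib

/-- Order convergence of a net. -/
def OConvNet {ι F : Type*} [Preorder ι] [Lattice F] [AddCommGroup F]
    (x : ι → F) (x₀ : F) : Prop :=
  ∃ D : Set F, D.Nonempty ∧ DirectedOn (· ≥ ·) D ∧ IsGLB D 0 ∧
    ∀ y ∈ D, ∃ α₀, ∀ α, α₀ ≤ α → |x α - x₀| ≤ y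

/-- Order convergence of a sequence. -/
def OConvSeq {F : Type*} [Lattice F] [AddCommGroup F] (x : ℕ → F) (x₀ : F) : Prop :=
  ∃ y : ℕ → F, Antitone y ∧ IsGLB (Set.range y) 0 ∧
    ∀ m, ∃ n₀, ∀ n, n₀ ≤ n → |x n - x₀| ≤ y m

/-- A net is order-Cauchy if its double net of differences order converges to `0`. -/
def OCauchyNet {ι F : Type*} [Preorder ι] [Lattice F] [AddCommGroup F]
    (x : ι → F) : Prop :=
  OConvNet (fun p : ι × ι => x p.1 - x p.2) (0 : F)

/-- A sequence is order-Cauchy if its double sequence of differences order converges to `0`. -/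
def OCauchySeq' {F : Type*} [Lattice F] [AddCommGroup F] (x : ℕ → F) : Prop :=
  OConvNet (fun p : ℕ × ℕ => x p.1 - x p.2) (0 : F)

section Maps
variable {E F : Type*} [Lattice E] [AddCommGroup E] [Norm E] [Lattice F] [AddCommGroup F]

def IsLeviMap (T : E → F) : Prop :=
  ∀ (ι : Type) [Nonempty ι] [Preorder ι] [IsDirected ι (· ≤ ·)],
    ∀ x : ι → E, Monotone x → (∃ C, ∀ α, ‖x α‖ ≤ C) →
      ∃ x₀ : E, OConvNet (fun α => T (x α)) (T x₀)

def IsSigmaLeviMap (T : E → F) : Prop :=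
  ∀ x : ℕ → E, Monotone x → (∃ C, ∀ n, ‖x n‖ ≤ C) →
    ∃ x₀ : E, OConvSeq (fun n => T (x n)) (T x₀)

def IsCqLeviMap (T : E → F) : Prop :=
  ∀ (ι : Type) [Nonempty ι] [Preorder ι] [IsDirected ι (· ≤ ·)],
    ∀ x : ι → E, Monotone x → (∃ C, ∀ α, ‖x α‖ ≤ C) →
      ∃ y₀ : F, OConvNet (fun α => T (x α)) y₀

def IsCqSigmaLeviMap (T : E → F) : Prop :=
  ∀ x : ℕ → E, Monotone x → (∃ C, ∀ n, ‖x n‖ ≤ C) →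
    ∃ y₀ : F, OConvSeq (fun n => T (x n)) y₀

def IsQLeviMap (T : E → F) : Prop :=
  ∀ (ι : Type) [Nonempty ι] [Preorder ι] [IsDirected ι (· ≤ ·)],
    ∀ x : ι → E, Monotone x → (∃ C, ∀ α, ‖x α‖ ≤ C) →
      OCauchyNet (fun α => T (x α))

def IsQSigmaLeviMap (T : E → F) : Prop :=
  ∀ x : ℕ → E, Monotone x → (∃ C, ∀ n, ‖x n‖ ≤ C) →
    OCauchySeq' (fun n => T (x n))

end Maps

open Filter Topology

/-- The subspace `c` of convergent real sequences. -/
def cSub : Submodule ℝ (ℕ → ℝ) where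
  carrier := {x | ∃ l : ℝ, Tendsto x atTop (nhds l)}
  add_mem' := by rintro x y ⟨l, hl⟩ ⟨m, hm⟩; exact ⟨l + m, hl.add hm⟩
  zero_mem' := ⟨0, tendsto_const_nhds⟩
  smul_mem' := by rintro c x ⟨l, hl⟩; exact ⟨c * l, hl.const_mul c⟩

/-- The subspace `c₀` of real null sequences. -/
def c0Sub : Submodule ℝ (ℕ → ℝ) where
  carrier := {x | Tendsto x atTop (nhds 0)}
  add_mem' := by intro x y hx hy; have := hx.add hy; rw [zero_add] at this; exact this
  zero_mem' := tendsto_const_nhds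
  smul_mem' := by intro c x hx; have := hx.const_mul c; rw [mul_zero] at this; exact this

/-- The subspace `ℓ^∞` of bounded real sequences. -/
def LinfSub : Submodule ℝ (ℕ → ℝ) where
  carrier := {x | ∃ C : ℝ, ∀ n, |x n| ≤ C}
  add_mem' := by
    rintro x y ⟨C, hC⟩ ⟨D, hD⟩
    exact ⟨C + D, fun n => (abs_add_le _ _).trans (add_le_add (hC n) (hD n))⟩
  zero_mem' := ⟨0, fun n => by simp⟩
  smul_mem' := by
    rintro c x ⟨C, hC⟩
    exact ⟨|c| * C, fun n => by
      simpa [abs_mul] using mul_le_mul_of_nonneg_left (hC n) (abs_nonneg c)⟩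

instance : Lattice cSub :=
  { (inferInstance : PartialOrder cSub) with
    sup := fun x y => ⟨x.1 ⊔ y.1, by
      obtain ⟨l, hl⟩ := x.2; obtain ⟨m, hm⟩ := y.2; exact ⟨l ⊔ m, hl.max hm⟩⟩
    inf := fun x y => ⟨x.1 ⊓ y.1, by
      obtain ⟨l, hl⟩ := x.2; obtain ⟨m, hm⟩ := y.2; exact ⟨l ⊓ m, hl.min hm⟩⟩
    le_sup_left := fun a b => (le_sup_left : a.1 ≤ a.1 ⊔ b.1)
    le_sup_right := fun a b => (le_sup_right : b.1 ≤ a.1 ⊔ b.1)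
    sup_le := fun a b c h₁ h₂ => (sup_le h₁ h₂ : a.1 ⊔ b.1 ≤ c.1)
    inf_le_left := fun a b => (inf_le_left : a.1 ⊓ b.1 ≤ a.1)
    inf_le_right := fun a b => (inf_le_right : a.1 ⊓ b.1 ≤ b.1)
    le_inf := fun a b c h₁ h₂ => (le_inf h₁ h₂ : a.1 ≤ b.1 ⊓ c.1) }

instance : Lattice c0Sub :=
  { (inferInstance : PartialOrder c0Sub) with
    sup := fun x y => ⟨x.1 ⊔ y.1, by
      have := x.2.max y.2; rw [max_self] at this; exact this⟩
    inf := fun x y => ⟨x.1 ⊓ y.1, by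
      have := x.2.min y.2; rw [min_self] at this; exact this⟩
    le_sup_left := fun a b => (le_sup_left : a.1 ≤ a.1 ⊔ b.1)
    le_sup_right := fun a b => (le_sup_right : b.1 ≤ a.1 ⊔ b.1)
    sup_le := fun a b c h₁ h₂ => (sup_le h₁ h₂ : a.1 ⊔ b.1 ≤ c.1)
    inf_le_left := fun a b => (inf_le_left : a.1 ⊓ b.1 ≤ a.1)
    inf_le_right := fun a b => (inf_le_right : a.1 ⊓ b.1 ≤ b.1)
    le_inf := fun a b c h₁ h₂ => (le_inf h₁ h₂ : a.1 ≤ b.1 ⊓ c.1) }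

instance : Lattice LinfSub :=
  { (inferInstance : PartialOrder LinfSub) with
    sup := fun x y => ⟨x.1 ⊔ y.1, by
      obtain ⟨C, hC⟩ := x.2; obtain ⟨D, hD⟩ := y.2
      exact ⟨C ⊔ D, fun n => by
        have h1 := hC n; have h2 := hD n
        simp only [Pi.sup_apply]
        rcases le_total (x.1 n) (y.1 n) with h | h
        · rw [sup_eq_right.2 h]; exact h2.trans le_sup_right
        · rw [sup_eq_left.2 h]; exact h1.trans le_sup_left⟩⟩
    inf := fun x y => ⟨x.1 ⊓ y.1, by
      obtain ⟨C, hC⟩ := x.2; obtain ⟨D, hD⟩ := y.2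
      exact ⟨C ⊔ D, fun n => by
        have h1 := hC n; have h2 := hD n
        simp only [Pi.inf_apply]
        rcases le_total (x.1 n) (y.1 n) with h | h
        · rw [inf_eq_left.2 h]; exact h1.trans le_sup_left
        · rw [inf_eq_right.2 h]; exact h2.trans le_sup_right⟩⟩
    le_sup_left := fun a b => (le_sup_left : a.1 ≤ a.1 ⊔ b.1)
    le_sup_right := fun a b => (le_sup_right : b.1 ≤ a.1 ⊔ b.1)
    sup_le := fun a b c h₁ h₂ => (sup_le h₁ h₂ : a.1 ⊔ b.1 ≤ c.1)
    inf_le_left := fun a b => (inf_le_left : a.1 ⊓ b.1 ≤ a.1)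
    inf_le_right := fun a b => (inf_le_right : a.1 ⊓ b.1 ≤ b.1)
    le_inf := fun a b c h₁ h₂ => (le_inf h₁ h₂ : a.1 ≤ b.1 ⊓ c.1) }

noncomputable instance : Norm cSub := ⟨fun x => ⨆ n, |x.1 n|⟩
noncomputable instance : Norm c0Sub := ⟨fun x => ⨆ n, |x.1 n|⟩
noncomputable instance : Norm LinfSub := ⟨fun x => ⨆ n, |x.1 n|⟩

/-- The sequence `x n = ∑_{k=1}^n e_{2k}` (in 0-based indexing, the indicator of the odd
positions below `2n`), as an element of `c`. -/
def xEven (n : ℕ) : cSub :=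
  ⟨fun j => if Odd j ∧ j < 2 * n then 1 else 0, by
    refine ⟨0, tendsto_atTop_of_eventually_const (i₀ := 2 * n) fun j hj => ?_⟩
    simp only [ite_eq_right_iff, and_imp]
    intro _ hlt
    omega⟩

/-! An increasing bounded net in `c` increases in `ℓ^∞` to its coordinatewise supremum, which
exists because `ℓ^∞` is Dedekind complete, and a monotone net order converges to its supremum.
The sequence `xEven` converges coordinatewise to the indicator of the odd numbers, and order
convergence in `ℓ^∞` implies coordinatewise convergence, so the only candidate for an order limit
of `xEven` is that indicator, which is not convergent and hence not in `c`. -/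

instance : IsOrderedAddMonoid LinfSub where
  add_le_add_left _ _ h _ j := add_le_add_left (h j) _

theorem oConvNet_of_monotone_of_isLUB {ι F : Type*} [Preorder ι] [Nonempty ι]
    [IsDirected ι (· ≤ ·)] [Lattice F] [AddCommGroup F] [IsOrderedAddMonoid F]
    {x : ι → F} {s : F} (hx : Monotone x) (hs : IsLUB (Set.range x) s) : OConvNet x s := by
  have hle : ∀ α, x α ≤ s := fun α => hs.1 ⟨α, rfl⟩
  refine ⟨Set.range fun α => s - x α, Set.range_nonempty _, ?_, ⟨?_, fun b hb => ?_⟩, ?_⟩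
  · rintro _ ⟨α, rfl⟩ _ ⟨β, rfl⟩
    obtain ⟨γ, hαγ, hβγ⟩ := directed_of (· ≤ ·) α β
    exact ⟨_, ⟨γ, rfl⟩, sub_le_sub_left (hx hαγ) s, sub_le_sub_left (hx hβγ) s⟩
  · rintro _ ⟨α, rfl⟩
    exact sub_nonneg.2 (hle α)
  · have : s ≤ s - b := hs.2 <| by
      rintro _ ⟨α, rfl⟩
      exact le_sub_comm.1 (hb ⟨α, rfl⟩)
    simpa using this
  · rintro _ ⟨β, rfl⟩
    refine ⟨β, fun α hβα => ?_⟩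
    rw [abs_sub_comm, abs_of_nonneg (sub_nonneg.2 (hle α))]
    exact sub_le_sub_left (hx hβα) s

theorem cSub.abs_apply_le_norm (a : cSub) (n : ℕ) : |a.1 n| ≤ ‖a‖ := by
  obtain ⟨l, hl⟩ := a.2
  exact le_ciSup hl.abs.bddAbove_range n

namespace LinfSub

theorem exists_isLUB {S : Set LinfSub} (hne : S.Nonempty) (hbdd : BddAbove S) :
    ∃ s, IsLUB S s := by
  obtain ⟨a, ha⟩ := hne
  obtain ⟨b, hb⟩ := hbdd
  let f : ℕ → ℝ := fun j => sSup ((fun w : LinfSub => w.1 j) '' S)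
  have le_f : ∀ w ∈ S, w.1 ≤ f := fun w hw j =>
    le_csSup ⟨b.1 j, by rintro _ ⟨v, hv, rfl⟩; exact hb hv j⟩ ⟨w, hw, rfl⟩
  have f_le : ∀ c : ℕ → ℝ, (∀ w ∈ S, w.1 ≤ c) → f ≤ c := fun c hc j =>
    csSup_le ⟨_, a, ha, rfl⟩ (by rintro _ ⟨w, hw, rfl⟩; exact hc w hw j)
  obtain ⟨Ca, hCa⟩ := a.2
  obtain ⟨Cb, hCb⟩ := b.2
  have f_mem : f ∈ LinfSub := ⟨max Ca Cb, fun j =>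
    (abs_le_max_abs_abs (le_f a ha j) (f_le b.1 (fun w hw => hb hw) j)).trans
      (max_le_max (hCa j) (hCb j))⟩
  exact ⟨⟨f, f_mem⟩, le_f, fun c hc => f_le c.1 hc⟩

theorem le_zero_of_forall_le_apply {ι : Type*} {y : ι → LinfSub} (hy : IsGLB (Set.range y) 0)
    {j : ℕ} {a : ℝ} (ha : ∀ m, a ≤ (y m).1 j) : a ≤ 0 := by
  let e : LinfSub := ⟨Pi.single j a, |a|, fun i => by
    rcases eq_or_ne i j with rfl | hij <;> simp [*]⟩
  have he : e ≤ 0 := hy.2 <| by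
    rintro _ ⟨m, rfl⟩ i
    rcases eq_or_ne i j with rfl | hij
    · simpa [e] using ha m
    · simpa [e, hij] using hy.1 ⟨m, rfl⟩ i
  simpa [e] using he j

theorem tendsto_apply_of_oConvSeq {u : ℕ → LinfSub} {x₀ : LinfSub} (h : OConvSeq u x₀) (j : ℕ) :
    Tendsto (fun n => (u n).1 j) atTop (𝓝 (x₀.1 j)) := by
  obtain ⟨y, -, hy, hux⟩ := h
  refine Metric.tendsto_atTop.2 fun ε hε => ?_
  obtain ⟨m, hm⟩ : ∃ m, (y m).1 j < ε := by
    by_contra! H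
    exact hε.not_ge (le_zero_of_forall_le_apply hy H)
  obtain ⟨n₀, hn₀⟩ := hux m
  exact ⟨n₀, fun n hn => (hn₀ n hn j).trans_lt hm⟩

end LinfSub

theorem not_tendsto_indicator_odd (l : ℝ) :
    ¬ Tendsto (fun j : ℕ => if Odd j then (1 : ℝ) else 0) atTop (𝓝 l) := by
  intro h
  have h_double : StrictMono fun n : ℕ => 2 * n := strictMono_mul_left_of_pos two_pos
  have h_even := h.comp h_double.tendsto_atTop
  have h_odd := h.comp (h_double.add_const 1).tendsto_atTop
  simp [Function.comp_def, Nat.odd_mul, show ¬ Odd 2 by decide] at h_even h_odd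
  exact zero_ne_one (h_even.trans h_odd.symm)

theorem xEven_monotone : Monotone xEven := by
  intro n m h j
  show (if Odd j ∧ j < 2 * n then (1 : ℝ) else 0) ≤ if Odd j ∧ j < 2 * m then 1 else 0
  split_ifs with hn hm <;> norm_num
  exact hm ⟨hn.1, by omega⟩

theorem xEven_norm_le (n : ℕ) : ‖xEven n‖ ≤ 1 :=
  ciSup_le fun j => by
    show |if Odd j ∧ j < 2 * n then (1 : ℝ) else 0| ≤ 1
    split_ifs <;> norm_num

theorem tendsto_xEven_apply (j : ℕ) :
    Tendsto (fun n => (xEven n).1 j) atTop (𝓝 (if Odd j then 1 else 0)) :=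
  tendsto_atTop_of_eventually_const (i₀ := j + 1) fun n hn => by
    have : j < 2 * n := by omega
    simp [xEven, this]

/-- the inclusion `J : c → ℓ^∞` is completely quasi Levi but not σ-Levi;
in particular, for the bounded increasing sequence `x n = ∑_{k=1}^n e_{2k}` of `c` there
is no `x ∈ c` with `J (x n)` order converging to `J x` in `ℓ^∞`. -/
theorem inclusion_c_linf_cqLevi_not_sigmaLevi
    (J : cSub → LinfSub) (hJ : ∀ a : cSub, (J a).1 = a.1) :
    IsCqLeviMap J ∧ ¬ IsSigmaLeviMap J ∧
    ¬ ∃ x : cSub, OConvSeq (fun n => J (xEven n)) (J x) := by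
  have no_limit : ¬ ∃ x : cSub, OConvSeq (fun n => J (xEven n)) (J x) := by
    rintro ⟨x, hx⟩
    have x_eq : x.1 = fun j => if Odd j then 1 else 0 := funext fun j => by
      have := LinfSub.tendsto_apply_of_oConvSeq hx j
      simp only [hJ] at this
      exact tendsto_nhds_unique this (tendsto_xEven_apply j)
    obtain ⟨l, hl⟩ := x.2
    exact not_tendsto_indicator_odd l (x_eq ▸ hl)
  refine ⟨?_, fun h => no_limit (h xEven xEven_monotone ⟨1, xEven_norm_le⟩), no_limit⟩
  intro ι _ _ _ x hx ⟨C, hC⟩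
  have J_mono : Monotone J := fun a b hab => by
    show (J a).1 ≤ (J b).1
    rw [hJ, hJ]
    exact hab
  have bdd : BddAbove (Set.range (J ∘ x)) := ⟨⟨fun _ => C, |C|, fun _ => le_rfl⟩, by
    rintro _ ⟨α, rfl⟩ j
    show (J (x α)).1 j ≤ C
    rw [hJ]
    exact (le_abs_self _).trans ((cSub.abs_apply_le_norm _ j).trans (hC α))⟩
  obtain ⟨s, hs⟩ := LinfSub.exists_isLUB (Set.range_nonempty _) bdd
  exact ⟨s, oConvNet_of_monotone_of_isLUB (J_mono.comp hx) hs⟩
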